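/- Let μ be a finite positive measure on ℝ and t₀ > 0, and define F_{t₀}(z) = F(z)/(1 + F(z)/t₀) where F = F_μ is the Stieltjes transform of μ. Then Im F_{t₀}(z) > 0 for all z in the upper half-plane (assuming μ ≠ 0), and for a.e. x ∈ ℝ, |F(x+i0)| > t₀ if and only if F_{t₀}(x+i0) > t₀/2 (at points where the boundary values exist and are real, i.e., off the support of the singular part). -/

import Mathlib

open MeasureTheory Filter

/-!
For `Im z > 0` every kernel `(x - z)⁻¹` has positive imaginary part, so `Im F(z) > 0` as soon as
`μ ≠ 0`; the Möbius map `w ↦ w / (1 + w / t₀)` has real coefficients and positive determinant,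
hence preserves the upper half-plane. On the real line it maps `{|L| > t₀}` onto `(t₀/2, ∞)`.
-/

lemma Complex.sub_ne_zero_of_im_pos {z : ℂ} (hz : 0 < z.im) (x : ℝ) : (x : ℂ) - z ≠ 0 := by
  intro h
  have := congrArg Complex.im h
  simp only [Complex.sub_im, Complex.ofReal_im, zero_sub, Complex.zero_im, neg_eq_zero] at this
  linarith

lemma Complex.im_inv_ofReal_sub_pos {z : ℂ} (hz : 0 < z.im) (x : ℝ) :
    0 < ((x : ℂ) - z)⁻¹.im := by
  have hnormSq : 0 < Complex.normSq ((x : ℂ) - z) :=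
    Complex.normSq_pos.2 (Complex.sub_ne_zero_of_im_pos hz x)
  rw [Complex.inv_im, Complex.sub_im, Complex.ofReal_im, zero_sub, neg_neg]
  positivity

lemma integrable_inv_ofReal_sub (μ : Measure ℝ) [IsFiniteMeasure μ] {z : ℂ} (hz : 0 < z.im) :
    Integrable (fun x : ℝ => ((x : ℂ) - z)⁻¹) μ := by
  have hcont : Continuous fun x : ℝ => ((x : ℂ) - z)⁻¹ :=
    (Complex.continuous_ofReal.sub continuous_const).inv₀ (Complex.sub_ne_zero_of_im_pos hz)
  refine (integrable_const z.im⁻¹).mono' hcont.aestronglyMeasurable (ae_of_all _ fun x => ?_)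
  rw [norm_inv]
  refine inv_anti₀ hz ?_
  calc z.im = |((x : ℂ) - z).im| := by simp [abs_of_pos hz]
    _ ≤ ‖(x : ℂ) - z‖ := Complex.abs_im_le_norm _

lemma im_integral_inv_ofReal_sub_pos (μ : Measure ℝ) [IsFiniteMeasure μ] (hμ : μ ≠ 0)
    {z : ℂ} (hz : 0 < z.im) : 0 < (∫ x : ℝ, ((x : ℂ) - z)⁻¹ ∂μ).im := by
  have hint := integrable_inv_ofReal_sub μ hz
  rw [← RCLike.im_eq_complex_im, ← integral_im hint]
  refine (integral_pos_iff_support_of_nonneg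
    (fun x => (Complex.im_inv_ofReal_sub_pos hz x).le) hint.im).2 ?_
  rw [Function.support_eq_univ fun x => (Complex.im_inv_ofReal_sub_pos hz x).ne']
  exact Measure.measure_univ_pos.2 hμ

lemma Complex.im_div_one_add_div_ofReal_pos {w : ℂ} (hw : 0 < w.im) {t : ℝ} (ht : 0 < t) :
    0 < (w / (1 + w / t)).im := by
  set d : ℂ := 1 + w / t with hd
  have hd_re : d.re = 1 + w.re / t := by simp [hd]
  have hd_im : d.im = w.im / t := by simp [hd]
  have hd_ne : d ≠ 0 := fun h => by
    have : d.im = 0 := by rw [h, Complex.zero_im]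
    rw [hd_im] at this
    exact (div_pos hw ht).ne' this
  have hnum : w.im * d.re - w.re * d.im = w.im := by
    rw [hd_re, hd_im]; field_simp; ring
  rw [Complex.div_im, div_sub_div_same, hnum]
  exact div_pos hw (Complex.normSq_pos.2 hd_ne)

lemma lt_abs_iff_half_lt_div_one_add_div {t : ℝ} (ht : 0 < t) (L : ℝ) :
    t < |L| ↔ t / 2 < L / (1 + L / t) := by
  have hden : 1 + L / t = (t + L) / t := by field_simp
  rw [hden, div_div_eq_mul_div]
  rcases lt_trichotomy (t + L) 0 with hneg | hzero | hpos
  · rw [abs_of_neg (by linarith), lt_div_iff_of_neg hneg]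
    constructor <;> intro <;> nlinarith
  · rw [hzero, div_zero, show L = -t by linarith, abs_neg, abs_of_pos ht]
    constructor <;> intro <;> linarith
  · rw [lt_div_iff₀ hpos]
    rcases abs_cases L with ⟨habs, _⟩ | ⟨habs, _⟩ <;> rw [habs] <;>
      constructor <;> intro <;> nlinarith

theorem stmt19 (μ : Measure ℝ) [IsFiniteMeasure μ] (hμ : μ ≠ 0) (t₀ : ℝ) (ht₀ : 0 < t₀) :
    (∀ z : ℂ, 0 < z.im →
      0 < ((∫ x : ℝ, ((x : ℂ) - z)⁻¹ ∂μ) /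
            (1 + (∫ x : ℝ, ((x : ℂ) - z)⁻¹ ∂μ) / (t₀ : ℂ))).im) ∧
    (∀ (x : ℝ) (L : ℝ),
      Tendsto (fun ε : ℝ => ∫ y : ℝ, ((y : ℂ) - ((x : ℂ) + ε * Complex.I))⁻¹ ∂μ)
        (nhdsWithin 0 (Set.Ioi 0)) (nhds (L : ℂ)) →
      (t₀ < |L| ↔ t₀ / 2 < L / (1 + L / t₀))) :=
  ⟨fun _ hz => Complex.im_div_one_add_div_ofReal_pos (im_integral_inv_ofReal_sub_pos μ hμ hz) ht₀,
    fun _ L _ => lt_abs_iff_half_lt_div_one_add_div ht₀ L⟩
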